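/- (Distribution formula, Theorem 6.) Let l ≥ 1 be an odd integer, h any integer, k ≥ 1 and m ≥ 0 integers, and x a real number. Then E_{m,q}^{(h,k)}(l·x) = ([l]_q^m / [l]_{−q}^k) · Σ_{i_1,…,i_k = 0}^{l−1} q^{h(i_1+⋯+i_k) − Σ_{j=2}^{k} (j−1) i_j} (−1)^{i_1+⋯+i_k} E_{m,q^l}^{(h,k)}(x + (i_1+⋯+i_k)/l). -/

import Mathlib

/-! The identity holds termwise in the binomial sum over `j`. Put `|i| = i_0 + ⋯ + i_{k-1}` and
`a_r = q^(h+j-r)`. The weight `q^(h|i| - Σ_r r i_r) (-1)^|i|` times the `j`-th term of `E_{q^l}` at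
`x + |i|/l` is the `j`-th term at `x` times `∏_r (-a_r)^(i_r)`. Summing over `i ∈ {0, …, l-1}^k`
factors into the alternating geometric sums `∏_r (1 + a_r^l)/(1 + a_r)` (as `l` is odd), which is
exactly the ratio of the denominators of the terms of `E_q` and `E_{q^l}`. The prefactor
`[l]_q^m / [l]_{-q}^k` accounts for the change of normalisation from `q^l` to `q`. -/

open Finset

/-- The q-number `[x]_q = (1 - q^x)/(1 - q)`, with `q^x = exp (x * log q)` (rpow). -/
noncomputable def qNum (q x : ℝ) : ℝ := (1 - q ^ x) / (1 - q)

/-- `[l]_{-q} = (1 - (-q)^l)/(1 + q)` for a natural number `l`. -/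
noncomputable def qNumNeg (q : ℝ) (l : ℕ) : ℝ := (1 - (-q) ^ l) / (1 + q)

/-- The higher-order q-Euler polynomial
`E_{m,q}^{(h,k)}(x) = ((1+q)^k/(1-q)^m) * Σ_{j=0}^m C(m,j) (-1)^j q^{jx} / Π_{i=0}^{k-1} (1 + q^{h+j-i})`. -/
noncomputable def qE (q : ℝ) (h : ℤ) (k m : ℕ) (x : ℝ) : ℝ :=
  ((1 + q) ^ k / (1 - q) ^ m) *
    ∑ j ∈ Finset.range (m + 1),
      (m.choose j : ℝ) * (-1) ^ j * q ^ ((j : ℝ) * x) /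
        ∏ i ∈ Finset.range k, (1 + q ^ ((h : ℝ) + (j : ℝ) - (i : ℝ)))

theorem Odd.geom_sum_neg {K : Type*} [Field K] {l : ℕ} (hl : Odd l) {a : K} (ha : 1 + a ≠ 0) :
    ∑ t ∈ range l, (-a) ^ t = (1 + a ^ l) / (1 + a) := by
  have ha' : -a - 1 ≠ 0 := fun h => ha (by linear_combination -h)
  rw [geom_sum_eq (sub_ne_zero.mp ha'), hl.neg_pow, div_eq_div_iff ha' ha]
  ring

theorem Fintype.sum_pi_prod_neg_pow_of_odd {ι K : Type*} [Fintype ι] [DecidableEq ι] [Field K]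
    {l : ℕ} (hl : Odd l) (a : ι → K) (ha : ∀ r, 1 + a r ≠ 0) :
    ∑ i : ι → Fin l, ∏ r, (-a r) ^ (i r : ℕ) = ∏ r, (1 + a r ^ l) / (1 + a r) := by
  refine (Fintype.prod_sum fun r (t : Fin l) => (-a r) ^ (t : ℕ)).symm.trans ?_
  refine Finset.prod_congr rfl fun r _ => ?_
  rw [Fin.sum_univ_eq_sum_range (fun t => (-a r) ^ t), hl.geom_sum_neg (ha r)]

noncomputable def qETerm (q : ℝ) (h : ℤ) (k m j : ℕ) (x : ℝ) : ℝ :=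
  (m.choose j : ℝ) * (-1) ^ j * q ^ ((j : ℝ) * x) /
    ∏ i ∈ range k, (1 + q ^ ((h : ℝ) + (j : ℝ) - (i : ℝ)))

theorem qE_eq_sum_qETerm (q : ℝ) (h : ℤ) (k m : ℕ) (x : ℝ) :
    qE q h k m x = (1 + q) ^ k / (1 - q) ^ m * ∑ j ∈ range (m + 1), qETerm q h k m j x :=
  rfl

section Distribution

variable {q : ℝ} {l k : ℕ}

theorem weight_mul_qETerm (hq : 0 < q) (hl : l ≠ 0) (h : ℤ) (m j : ℕ) (x : ℝ) (n : Fin k → ℕ) :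
    q ^ ((h : ℝ) * (∑ r, (n r : ℝ)) - ∑ r : Fin k, (r : ℝ) * (n r : ℝ)) *
        (-1 : ℝ) ^ (∑ r, n r) * qETerm (q ^ l) h k m j (x + (∑ r, (n r : ℝ)) / l) =
      qETerm (q ^ l) h k m j x * ∏ r : Fin k, (-q ^ ((h : ℝ) + j - r)) ^ n r := by
  have hprod : ∏ r : Fin k, (-q ^ ((h : ℝ) + j - r)) ^ n r =
      (-1) ^ (∑ r, n r) * q ^ (∑ r : Fin k, ((h : ℝ) + j - r) * n r) := by
    rw [Real.rpow_sum_of_pos hq, ← prod_pow_eq_pow_sum, ← prod_mul_distrib]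
    refine Finset.prod_congr rfl fun r _ => ?_
    rw [neg_pow, Real.rpow_mul_natCast hq.le]
  have hexp : (h : ℝ) * (∑ r, (n r : ℝ)) - ∑ r : Fin k, (r : ℝ) * (n r : ℝ) +
      l * ((j : ℝ) * (x + (∑ r, (n r : ℝ)) / l)) =
      l * ((j : ℝ) * x) + ∑ r : Fin k, ((h : ℝ) + j - r) * n r := by
    simp only [add_mul, sub_mul, sum_add_distrib, sum_sub_distrib, ← mul_sum]
    field_simp
    ring
  have hpow : q ^ ((h : ℝ) * (∑ r, (n r : ℝ)) - ∑ r : Fin k, (r : ℝ) * (n r : ℝ)) *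
      (-1 : ℝ) ^ (∑ r, n r) * (q ^ l) ^ ((j : ℝ) * (x + (∑ r, (n r : ℝ)) / l)) =
      (q ^ l) ^ ((j : ℝ) * x) * ∏ r : Fin k, (-q ^ ((h : ℝ) + j - r)) ^ n r := by
    rw [hprod, ← Real.rpow_natCast_mul hq.le, ← Real.rpow_natCast_mul hq.le, mul_right_comm,
      ← Real.rpow_add hq, hexp, Real.rpow_add hq]
    ring
  rw [qETerm, qETerm]
  linear_combination ((m.choose j : ℝ) * (-1) ^ j /
    ∏ i ∈ range k, (1 + (q ^ l) ^ ((h : ℝ) + j - i))) * hpow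

theorem qETerm_pow_mul_prod (hq : 0 < q) (h : ℤ) (m j : ℕ) (x : ℝ) :
    qETerm (q ^ l) h k m j x *
        ∏ r ∈ range k, (1 + (q ^ ((h : ℝ) + j - r)) ^ l) / (1 + q ^ ((h : ℝ) + j - r)) =
      qETerm q h k m j (l * x) := by
  have hden : 0 < ∏ r ∈ range k, (1 + q ^ ((h : ℝ) + j - r)) :=
    prod_pos fun r _ => by positivity
  have hden' : 0 < ∏ r ∈ range k, (1 + (q ^ ((h : ℝ) + j - r)) ^ l) :=
    prod_pos fun r _ => by positivity
  rw [qETerm, qETerm, show (j : ℝ) * (l * x) = j * x * l by ring, Real.rpow_mul_natCast hq.le]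
  simp only [← Real.rpow_pow_comm hq.le, prod_div_distrib]
  field_simp

theorem sum_weight_mul_qETerm (hq : 0 < q) (hl : Odd l) (h : ℤ) (m j : ℕ) (x : ℝ) :
    ∑ i : Fin k → Fin l,
        q ^ ((h : ℝ) * (∑ r, ((i r : ℕ) : ℝ)) - ∑ r : Fin k, (r : ℝ) * ((i r : ℕ) : ℝ)) *
          (-1 : ℝ) ^ (∑ r, (i r : ℕ)) *
          qETerm (q ^ l) h k m j (x + (∑ r, ((i r : ℕ) : ℝ)) / l) =
      qETerm q h k m j (l * x) := by
  have hden : ∀ r : ℕ, 0 < 1 + q ^ ((h : ℝ) + j - r) := fun r => by positivity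
  simp_rw [weight_mul_qETerm hq hl.pos.ne']
  rw [← mul_sum, Fintype.sum_pi_prod_neg_pow_of_odd hl (fun r : Fin k => q ^ ((h : ℝ) + j - r))
      fun r => (hden r).ne',
    Fin.prod_univ_eq_prod_range
      (fun r : ℕ => (1 + (q ^ ((h : ℝ) + j - r)) ^ l) / (1 + q ^ ((h : ℝ) + j - r))),
    qETerm_pow_mul_prod hq]

theorem qNum_pow_div_qNumNeg_pow_mul (hq : 0 < q) (hq1 : q ≠ 1) (hl : Odd l) (k m : ℕ) :
    qNum q l ^ m / qNumNeg q l ^ k * ((1 + q ^ l) ^ k / (1 - q ^ l) ^ m) =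
      (1 + q) ^ k / (1 - q) ^ m := by
  have h1 : 1 - q ≠ 0 := sub_ne_zero.mpr (Ne.symm hq1)
  have hl1 : 1 - q ^ l ≠ 0 :=
    sub_ne_zero.mpr fun h => hq1 ((pow_eq_one_iff_of_nonneg hq.le hl.pos.ne').mp h.symm)
  rw [qNum, qNumNeg, hl.neg_pow, Real.rpow_natCast, sub_neg_eq_add, div_pow, div_pow]
  field_simp

end Distribution

theorem stmt_11 (q : ℝ) (hq : 0 < q) (hq1 : q ≠ 1) (l : ℕ) (hodd : Odd l)
    (h : ℤ) (k : ℕ) (m : ℕ) (x : ℝ) :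
    qE q h k m (l * x) =
      (qNum q l ^ m / qNumNeg q l ^ k) *
        ∑ i : Fin k → Fin l,
          q ^ ((h : ℝ) * (∑ j : Fin k, ((i j : ℕ) : ℝ)) -
                ∑ j : Fin k, (j : ℝ) * ((i j : ℕ) : ℝ)) *
            (-1 : ℝ) ^ (∑ j : Fin k, (i j : ℕ)) *
            qE (q ^ l) h k m (x + (∑ j : Fin k, ((i j : ℕ) : ℝ)) / l) := by
  rw [qE_eq_sum_qETerm, ← qNum_pow_div_qNumNeg_pow_mul hq hq1 hodd k m, mul_assoc]
  congr 1
  simp_rw [qE_eq_sum_qETerm, ← sum_weight_mul_qETerm hq hodd h m, mul_sum]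
  rw [sum_comm]
  exact sum_congr rfl fun j _ => sum_congr rfl fun i _ => by ring
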